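/- There always exists an optimal deterministic policy: there is a deterministic policy μ : S → A such that for every stochastic policy π and every state-action pair (s,a), Q^μ(s,a) ≤ Q^π(s,a); in particular V^μ(s) ≤ V^π(s) for all s ∈ S, where V^π(s) := ∑_{a} (π s a) · Q^π(s,a). -/

import Mathlib

open Finset

/-- The policy Bellman operator `T^π` on action-value functions for a finite
discounted MDP: `(T^π Q)(s,a) = l(s,a) + γ ∑_{s'} P(s'|s,a) ∑_{a'} π(a'|s') Q(s',a')`. -/
noncomputable def Tpol {S A : Type*} [Fintype S] [Fintype A]
    (P : S → A → PMF S) (l : S → A → ℝ) (γ : ℝ) (π : S → PMF A)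
    (Q : S × A → ℝ) : S × A → ℝ :=
  fun sa => l sa.1 sa.2 +
    γ * ∑ s' : S, (P sa.1 sa.2 s').toReal * ∑ a' : A, (π s' a').toReal * Q (s', a')

/-- The state-value function `V^π(s) = ∑_a π(a|s) Q(s,a)` induced by a policy `π`
and an action-value function `Q`. -/
noncomputable def Vof {S A : Type*} [Fintype A] (π : S → PMF A) (Q : S × A → ℝ)
    (s : S) : ℝ :=
  ∑ a : A, (π s a).toReal * Q (s, a)

/-! The Bellman optimality operator `Q ↦ l + γ P (min_a Q)` is a `γ`-contraction, so it has a fixed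
point `Q*`. A policy `μ` greedy for `Q*` has `Q*` as the fixed point of `T^μ`. Comparison principle:
if `Q₁ = T^π₁ Q₁`, `Q₂ = T^π₂ Q₂` and `π₁` does at least as well as `π₂` against `Q₁` at every state,
then `Q₁ ≤ Q₂`. Since `μ` is greedy for `Q* = Q^μ`, this gives `Q^μ ≤ Q^π` for every `π`. -/

namespace PMF

variable {α : Type*} [Fintype α]

lemma sum_toReal_eq_one (p : PMF α) : ∑ a, (p a).toReal = 1 := by
  rw [← ENNReal.toReal_sum fun a _ => p.apply_ne_top a, ← tsum_fintype (L := .unconditional _),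
    p.tsum_coe, ENNReal.toReal_one]

lemma sum_toReal_mul_const (p : PMF α) (c : ℝ) : ∑ a, (p a).toReal * c = c := by
  rw [← Finset.sum_mul, p.sum_toReal_eq_one, one_mul]

lemma sum_toReal_mul_le (p : PMF α) {f : α → ℝ} {c : ℝ} (h : ∀ a, f a ≤ c) :
    ∑ a, (p a).toReal * f a ≤ c :=
  (Finset.sum_le_sum fun a _ => mul_le_mul_of_nonneg_left (h a) ENNReal.toReal_nonneg).trans_eq
    (p.sum_toReal_mul_const c)

lemma le_sum_toReal_mul (p : PMF α) {f : α → ℝ} {c : ℝ} (h : ∀ a, c ≤ f a) :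
    c ≤ ∑ a, (p a).toReal * f a :=
  (p.sum_toReal_mul_const c).symm.trans_le
    (Finset.sum_le_sum fun a _ => mul_le_mul_of_nonneg_left (h a) ENNReal.toReal_nonneg)

lemma abs_sum_toReal_mul_le (p : PMF α) {f : α → ℝ} {c : ℝ} (h : ∀ a, |f a| ≤ c) :
    |∑ a, (p a).toReal * f a| ≤ c :=
  abs_le.2 ⟨p.le_sum_toReal_mul fun a => (abs_le.1 (h a)).1,
    p.sum_toReal_mul_le fun a => (abs_le.1 (h a)).2⟩

lemma sum_pure_toReal_mul (b : α) (f : α → ℝ) : ∑ a, ((pure b) a).toReal * f a = f b := by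
  rw [Finset.sum_eq_single b (fun a _ hab => by simp [hab]) (by simp)]
  simp

end PMF

lemma Finset.abs_inf'_sub_inf'_le {ι α : Type*} [AddCommGroup α] [LinearOrder α]
    [IsOrderedAddMonoid α] {s : Finset ι} (hs : s.Nonempty) {f g : ι → α} {c : α}
    (h : ∀ i ∈ s, |f i - g i| ≤ c) : |s.inf' hs f - s.inf' hs g| ≤ c := by
  have key : ∀ f g : ι → α, (∀ i ∈ s, |f i - g i| ≤ c) → s.inf' hs f - c ≤ s.inf' hs g :=
    fun f g h => Finset.le_inf' _ _ fun i hi => sub_le_iff_le_add.2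
      ((Finset.inf'_le f hi).trans (sub_le_iff_le_add'.1 (le_of_abs_le (h i hi))))
  exact abs_sub_le_iff.2 ⟨sub_le_comm.1 (key f g h),
    sub_le_comm.1 (key g f fun i hi => abs_sub_comm (g i) (f i) ▸ h i hi)⟩

section Vof

variable {S A : Type*} [Fintype A]

lemma Vof_pure (μ : S → A) (Q : S × A → ℝ) (s : S) :
    Vof (fun s => PMF.pure (μ s)) Q s = Q (s, μ s) :=
  PMF.sum_pure_toReal_mul (μ s) fun a => Q (s, a)

lemma Vof_mono (π : S → PMF A) {Q Q' : S × A → ℝ} (h : Q ≤ Q') (s : S) :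
    Vof π Q s ≤ Vof π Q' s :=
  Finset.sum_le_sum fun a _ => mul_le_mul_of_nonneg_left (h (s, a)) ENNReal.toReal_nonneg

end Vof

section Bellman

variable {S A : Type*} [Fintype S] [Fintype A] (P : S → A → PMF S) (l : S → A → ℝ)

lemma Tpol_apply (γ : ℝ) (π : S → PMF A) (Q : S × A → ℝ) (sa : S × A) :
    Tpol P l γ π Q sa = l sa.1 sa.2 + γ * ∑ s', (P sa.1 sa.2 s').toReal * Vof π Q s' :=
  rfl

theorem le_of_Tpol_eq_self {γ : ℝ} (hγ0 : 0 ≤ γ) (hγ1 : γ < 1) {π₁ π₂ : S → PMF A}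
    {Q₁ Q₂ : S × A → ℝ} (h₁ : Tpol P l γ π₁ Q₁ = Q₁) (h₂ : Tpol P l γ π₂ Q₂ = Q₂)
    (h : ∀ s, Vof π₁ Q₁ s ≤ Vof π₂ Q₁ s) : Q₁ ≤ Q₂ := by
  -- `d`, the sup norm of `(Q₁ - Q₂)⁺`, satisfies `d ≤ γ d`, so it vanishes.
  set d := ‖fun sa => max (Q₁ sa - Q₂ sa) 0‖
  have hd : ∀ sa, Q₁ sa - Q₂ sa ≤ d := fun sa => (le_max_left _ 0).trans
    ((le_abs_self _).trans (norm_le_pi_norm (fun sa => max (Q₁ sa - Q₂ sa) 0) sa))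
  have hγd : ∀ sa, Q₁ sa - Q₂ sa ≤ γ * d := by
    intro sa
    have hVof : ∀ s, Vof π₁ Q₁ s - Vof π₂ Q₂ s ≤ d := fun s => calc
      Vof π₁ Q₁ s - Vof π₂ Q₂ s ≤ Vof π₂ Q₁ s - Vof π₂ Q₂ s := by linarith [h s]
      _ = ∑ a, (π₂ s a).toReal * (Q₁ (s, a) - Q₂ (s, a)) := by
        simp only [Vof, mul_sub, Finset.sum_sub_distrib]
      _ ≤ d := (π₂ s).sum_toReal_mul_le fun a => hd (s, a)
    calc Q₁ sa - Q₂ sa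
        = γ * ∑ s', (P sa.1 sa.2 s').toReal * (Vof π₁ Q₁ s' - Vof π₂ Q₂ s') := by
          rw [← h₁, ← h₂, Tpol_apply, Tpol_apply, h₁, h₂]
          simp only [mul_sub, Finset.sum_sub_distrib]
          ring
      _ ≤ γ * d := mul_le_mul_of_nonneg_left ((P sa.1 sa.2).sum_toReal_mul_le hVof) hγ0
  have hd_le : d ≤ γ * d :=
    (pi_norm_le_iff_of_nonneg (by positivity)).2 fun sa => by
      rw [Real.norm_of_nonneg (le_max_right _ _)]
      exact max_le (hγd sa) (by positivity)
  have hd_nonpos : d ≤ 0 := by nlinarith [norm_nonneg (fun sa => max (Q₁ sa - Q₂ sa) 0)]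
  exact fun sa => sub_nonpos.1 ((hd sa).trans hd_nonpos)

variable [Nonempty A]

/-- The Bellman optimality operator. -/
noncomputable def Topt (γ : ℝ) (Q : S × A → ℝ) : S × A → ℝ :=
  fun sa => l sa.1 sa.2 +
    γ * ∑ s', (P sa.1 sa.2 s').toReal * univ.inf' univ_nonempty fun a' => Q (s', a')

theorem contractingWith_Topt {γ : ℝ} (hγ0 : 0 ≤ γ) (hγ1 : γ < 1) :
    ContractingWith ⟨γ, hγ0⟩ (Topt P l γ) := by
  refine ⟨hγ1, LipschitzWith.of_dist_le_mul fun Q₁ Q₂ => ?_⟩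
  refine (dist_pi_le_iff (by positivity)).2 fun sa => ?_
  rw [Real.dist_eq, Topt, Topt, add_sub_add_left_eq_sub, ← mul_sub, ← Finset.sum_sub_distrib,
    abs_mul, abs_of_nonneg hγ0]
  simp only [← mul_sub]
  refine mul_le_mul_of_nonneg_left ((P sa.1 sa.2).abs_sum_toReal_mul_le fun s' => ?_) hγ0
  refine Finset.abs_inf'_sub_inf'_le _ fun a _ => ?_
  rw [← Real.dist_eq]
  exact dist_le_pi_dist Q₁ Q₂ (s', a)

lemma Tpol_eq_Topt_of_forall_le {γ : ℝ} {Q : S × A → ℝ} {μ : S → A}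
    (hμ : ∀ s a, Q (s, μ s) ≤ Q (s, a)) :
    Tpol P l γ (fun s => PMF.pure (μ s)) Q = Topt P l γ Q := by
  have hinf : ∀ s, (univ.inf' univ_nonempty fun a => Q (s, a)) =
      Vof (fun s => PMF.pure (μ s)) Q s := fun s => by
      rw [Vof_pure]
      exact le_antisymm (inf'_le _ (mem_univ _)) (le_inf' _ _ fun a _ => hμ s a)
  funext sa
  simp only [Tpol_apply, Topt, hinf]

end Bellman

theorem exists_optimal_deterministic_policy_general
    {S A : Type*} [Fintype S] [Fintype A] [Nonempty A]
    (P : S → A → PMF S) (l : S → A → ℝ) (γ : ℝ) (hγ0 : 0 ≤ γ) (hγ1 : γ < 1) :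
    ∃ μ : S → A, ∀ Qmu : S × A → ℝ,
      Tpol P l γ (fun s => PMF.pure (μ s)) Qmu = Qmu →
      ∀ π : S → PMF A, ∀ Qpi : S × A → ℝ, Tpol P l γ π Qpi = Qpi →
        (∀ s : S, ∀ a : A, Qmu (s, a) ≤ Qpi (s, a)) ∧
        (∀ s : S, Vof (fun s' => PMF.pure (μ s')) Qmu s ≤ Vof π Qpi s) := by
  obtain ⟨Qstar, hQstar⟩ : ∃ Q, Topt P l γ Q = Q :=
    ⟨_, (contractingWith_Topt P l hγ0 hγ1).fixedPoint_isFixedPt⟩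
  choose μ hμ using fun s => Finite.exists_min fun a => Qstar (s, a)
  rw [← Tpol_eq_Topt_of_forall_le P l hμ] at hQstar
  refine ⟨μ, fun Qmu hQmu π Qpi hQpi => ?_⟩
  obtain rfl : Qmu = Qstar := le_antisymm
    (le_of_Tpol_eq_self P l hγ0 hγ1 hQmu hQstar fun _ => le_rfl)
    (le_of_Tpol_eq_self P l hγ0 hγ1 hQstar hQmu fun _ => le_rfl)
  have hgreedy : ∀ s, Vof (fun s => PMF.pure (μ s)) Qmu s ≤ Vof π Qmu s := fun s => by
    rw [Vof_pure]
    exact (π s).le_sum_toReal_mul (hμ s)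
  have hle : Qmu ≤ Qpi := le_of_Tpol_eq_self P l hγ0 hγ1 hQmu hQpi hgreedy
  exact ⟨fun s a => hle (s, a), fun s => (hgreedy s).trans (Vof_mono π hle s)⟩

/-- There always exists an optimal deterministic policy: some `μ : S → A`
(identified with the stochastic policy `s ↦ PMF.pure (μ s)`) satisfies
`Q^μ(s,a) ≤ Q^π(s,a)` for every stochastic policy `π` and all `(s,a)`; in
particular `V^μ(s) ≤ V^π(s)` for all `s`. -/
theorem exists_optimal_deterministic_policy
    {S A : Type*} [Fintype S] [Fintype A] [Nonempty S] [Nonempty A]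
    (P : S → A → PMF S) (l : S → A → ℝ) (γ : ℝ) (hγ0 : 0 ≤ γ) (hγ1 : γ < 1) :
    ∃ μ : S → A, ∀ Qmu : S × A → ℝ,
      Tpol P l γ (fun s => PMF.pure (μ s)) Qmu = Qmu →
      ∀ π : S → PMF A, ∀ Qpi : S × A → ℝ, Tpol P l γ π Qpi = Qpi →
        (∀ s : S, ∀ a : A, Qmu (s, a) ≤ Qpi (s, a)) ∧
        (∀ s : S, Vof (fun s' => PMF.pure (μ s')) Qmu s ≤ Vof π Qpi s) :=
  exists_optimal_deterministic_policy_general P l γ hγ0 hγ1
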